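/- The higher invariant of the map φ^(1) of Section 5 is expressible in terms of the three invariants of its shadow map: for all a, b, c, x, y, z, u in ℂ, Π_h(x, y, z, u) = a·Σ₂(x, y, z, u) − Σ₂(x, y, z, u)² + (b − 4)·Σ₃(x, y, z, u) + 2·Σ₄(x, y, z, u). -/
import Mathlib


/-- The higher invariant `Π_h` of the map `φ^(1)` of Section 5, in affine coordinates. -/
noncomputable def Pih (a b c x y z u : ℂ) : ℂ :=
  a * c * (u*y + z*u + x*y + x*z + 2*y*z) - a * (x + y + z + u)
    + b * c * (y + z) * (x + z) * (u + y) - b * (x + z) * (u + y)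
    - c^2 * (u^2*y^2 + 2*u^2*y*z + u^2*z^2 + 2*u*y^2*z + 2*u*y*z^2 + x^2*y^2
        + 2*x^2*y*z + x^2*z^2 + 2*x*y^2*z + 2*x*y*z^2 + 2*y^2*z^2)
    + 2 * c * (u^2*y + u^2*z + u*y^2 + 2*u*y*z + x^2*y + x^2*z + 2*x*y*z
        + x*z^2 + y^2*z + y*z^2)
    - (u^2 + 2*u*y + x^2 + 2*x*z + y^2 + z^2)

/-- First invariant `Σ₂` of the shadow map `φ_s^(1)` of Section 5. -/
noncomputable def Sigma₂ (c x y z u : ℂ) : ℂ :=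
  c * (u*y + z*u + x*y + x*z + 2*y*z) - (x + y + z + u)

/-- Second invariant `Σ₃` of the shadow map `φ_s^(1)`. -/
noncomputable def Sigma₃ (c x y z u : ℂ) : ℂ :=
  (x + z) * (u + y) * (c * (y + z) - 1)

/-- Third invariant `Σ₄` of the shadow map `φ_s^(1)`. -/
noncomputable def Sigma₄ (c x y z u : ℂ) : ℂ :=
  c * (u*z^2 + x*y^2 + y^2*z + y*z^2)
    + c^2 * (x*y + x*z + y*z) * (u*y + z*u + y*z) - (x + z) * (u + y)

/-- The higher invariant of the map `φ^(1)` of Section 5 is expressible in terms of the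
three invariants of its shadow map. -/
theorem phi1_Pih_in_terms_of_shadow_invariants (a b c x y z u : ℂ) :
    Pih a b c x y z u =
      a * Sigma₂ c x y z u - (Sigma₂ c x y z u)^2
        + (b - 4) * Sigma₃ c x y z u + 2 * Sigma₄ c x y z u := by
  unfold Pih Sigma₂ Sigma₃ Sigma₄; ring
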